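/- For every s ∈ (0,1), there are exactly two 2-dimensional linear subspaces W of ℝ⁴ such that W has nonzero intersection with each of the four subspaces L(−1), L(0), L(1), L(s); that is, this instance of the problem of four lines has exactly two solutions, and both are real. -/

import Mathlib

/-- The vector (1, γ(t)) ∈ ℝ⁴, where γ(t) = (6t² − 1, (7/2)t³ + (3/2)t, −(1/2)t³ + (3/2)t). -/
noncomputable def vGamma (t : ℝ) : Fin 4 → ℝ :=
  ![1, 6 * t ^ 2 - 1, 7 / 2 * t ^ 3 + 3 / 2 * t, -(1 / 2) * t ^ 3 + 3 / 2 * t]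

/-- The vector (0, γ′(t)) ∈ ℝ⁴, where γ′(t) = (12t, (21/2)t² + 3/2, −(3/2)t² + 3/2). -/
noncomputable def vGamma' (t : ℝ) : Fin 4 → ℝ :=
  ![0, 12 * t, 21 / 2 * t ^ 2 + 3 / 2, -(3 / 2) * t ^ 2 + 3 / 2]

/-- L(t) ⊆ ℝ⁴: the 2-dimensional subspace spanned by (1, γ(t)) and (0, γ′(t)),
the projective closure of the tangent line to γ at γ(t). -/
noncomputable def Lhat (t : ℝ) : Submodule ℝ (Fin 4 → ℝ) :=
  Submodule.span ℝ {vGamma t, vGamma' t}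

/-!
A plane `W = span {u, v}` meets `L(t)` iff `det (u, v, γ(t), γ'(t)) = 0`, and this determinant is
a linear form in the Plücker coordinates `pᵢⱼ` of `W` with coefficients polynomial in `t`
(`det_tangent`). The conditions at `t = -1, 0, 1` give `p₁₃ = p₀₂`, `p₁₂ = p₀₃`, `p₂₃ = p₀₁`, and
then, as `s ∉ {-1, 0, 1}`, the condition at `t = s` gives `s(p₀₂ + 7p₀₃) = 4p₀₁`. With the Plücker
relation this forces `p₀₁ ≠ 0`, and `(c, d) = (p₀₂, p₀₃) / p₀₁` is one of the two intersection
points of the hyperbola `c² - d² = 1` with the line `s(c + 7d) = 4`. Since Plücker coordinates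
determine the plane, the solutions correspond bijectively to these two points.
-/

open Submodule

section Plucker

variable {K ι : Type*} [Field K]

def plucker (u v : ι → K) (i j : ι) : K := u i * v j - u j * v i

theorem linearIndependent_pair_iff_exists_plucker_ne_zero {u v : ι → K} :
    LinearIndependent K ![u, v] ↔ ∃ i j, plucker u v i j ≠ 0 := by
  unfold plucker
  constructor
  · intro huv
    by_contra! hzero
    obtain ⟨i, hi⟩ : ∃ i, u i ≠ 0 := by
      by_contra! hu
      exact huv.ne_zero 0 (funext hu)
    have hdep : v i • u + (-u i) • v = 0 := by
      ext j
      simp only [Pi.add_apply, Pi.smul_apply, smul_eq_mul, Pi.zero_apply]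
      linear_combination -hzero i j
    exact hi (by simpa using (LinearIndependent.pair_iff.1 huv _ _ hdep).2)
  · rintro ⟨i, j, hij⟩
    refine LinearIndependent.pair_iff.2 fun a b hab => ?_
    have hi := congrFun hab i
    have hj := congrFun hab j
    simp only [Pi.add_apply, Pi.smul_apply, smul_eq_mul, Pi.zero_apply] at hi hj
    refine ⟨(mul_eq_zero.1 ?_).resolve_right hij, (mul_eq_zero.1 ?_).resolve_right hij⟩
    · linear_combination v j * hi - v i * hj
    · linear_combination u i * hj - u j * hi

theorem plucker_relation (u v : ι → K) (i j k l : ι) :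
    plucker u v i j * plucker u v k l - plucker u v i k * plucker u v j l
      + plucker u v i l * plucker u v j k = 0 := by
  simp only [plucker]; ring

theorem finrank_span_pair {V : Type*} [AddCommGroup V] [Module K V] {u v : V}
    (huv : LinearIndependent K ![u, v]) :
    Module.finrank K (span K {u, v}) = 2 := by
  rw [← Matrix.range_cons_cons_empty u v ![], finrank_span_eq_card huv, Fintype.card_fin]

theorem mem_span_pair_of_minor_eq_zero {u v w : ι → K} {i j : ι} (hij : plucker u v i j ≠ 0)
    (hw : ∀ k, w k * plucker u v i j - w j * plucker u v i k + w i * plucker u v j k = 0) :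
    w ∈ span K {u, v} := by
  refine mem_span_pair.2 ⟨plucker w v i j / plucker u v i j, plucker u w i j / plucker u v i j, ?_⟩
  ext k
  simp only [plucker, Pi.add_apply, Pi.smul_apply, smul_eq_mul] at hij hw ⊢
  rw [div_mul_eq_mul_div, div_mul_eq_mul_div, ← add_div, div_eq_iff hij]
  linear_combination -(hw k)

theorem span_pair_le_of_plucker_eq_mul {u v x y : ι → K} {μ : K} {i j : ι}
    (hij : plucker u v i j ≠ 0) (h : ∀ k l, plucker u v k l = μ * plucker x y k l) :
    span K {x, y} ≤ span K {u, v} := by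
  refine span_le.2 (Set.insert_subset_iff.2 ⟨?_, Set.singleton_subset_iff.2 ?_⟩) <;>
  · refine mem_span_pair_of_minor_eq_zero hij fun k => ?_
    simp only [h]
    simp only [plucker]
    ring

theorem span_pair_eq_of_plucker_eq_mul {u v x y : ι → K} {μ : K} {i j : ι} (hμ : μ ≠ 0)
    (hij : plucker x y i j ≠ 0) (h : ∀ k l, plucker u v k l = μ * plucker x y k l) :
    span K {u, v} = span K {x, y} := by
  refine le_antisymm (span_pair_le_of_plucker_eq_mul (μ := μ⁻¹) hij fun k l => ?_)
    (span_pair_le_of_plucker_eq_mul (by rw [h]; exact mul_ne_zero hμ hij) h)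
  rw [h, inv_mul_cancel_left₀ hμ]

theorem exists_linearIndependent_pair_of_finrank_eq_two {V : Type*} [AddCommGroup V] [Module K V]
    {W : Submodule K V} (hW : Module.finrank K W = 2) :
    ∃ u v : V, LinearIndependent K ![u, v] ∧ span K {u, v} = W := by
  have : Module.Finite K W := Module.finite_of_finrank_eq_succ hW
  let b := Module.finBasisOfFinrankEq K W hW
  have hli : LinearIndependent K ![(b 0 : V), b 1] := by
    have h := b.linearIndependent.map' W.subtype W.ker_subtype
    rwa [show W.subtype ∘ b = ![(b 0 : V), b 1] by ext i : 1; fin_cases i <;> rfl] at h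
  refine ⟨b 0, b 1, hli, eq_of_le_of_finrank_eq ?_ ((finrank_span_pair hli).trans hW.symm)⟩
  exact span_le.2 (Set.insert_subset_iff.2 ⟨(b 0).2, Set.singleton_subset_iff.2 (b 1).2⟩)

theorem span_pair_inf_span_pair_ne_bot_iff_det_eq_zero {u v x y : Fin 4 → K}
    (huv : LinearIndependent K ![u, v]) (hxy : LinearIndependent K ![x, y]) :
    span K {u, v} ⊓ span K {x, y} ≠ ⊥ ↔ (Matrix.of ![u, v, x, y]).det = 0 := by
  have happend : Matrix.of ![u, v, x, y] = Sum.elim ![u, v] ![x, y] ∘ finSumFinEquiv.symm := by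
    ext i : 1; fin_cases i <;> rfl
  rw [← not_iff_not, not_not, ← Ne, ← isUnit_iff_ne_zero, ← Matrix.isUnit_iff_isUnit_det,
    ← Matrix.linearIndependent_rows_iff_isUnit, Matrix.row, happend, linearIndependent_equiv,
    linearIndependent_sum, disjoint_iff]
  simp only [Function.comp_def, Sum.elim_inl, Sum.elim_inr, huv, hxy, Matrix.range_cons_cons_empty,
    true_and]

theorem plucker_fin_four_ext {u v x y : Fin 4 → K} {μ : K}
    (h01 : plucker u v 0 1 = μ * plucker x y 0 1) (h02 : plucker u v 0 2 = μ * plucker x y 0 2)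
    (h03 : plucker u v 0 3 = μ * plucker x y 0 3) (h12 : plucker u v 1 2 = μ * plucker x y 1 2)
    (h13 : plucker u v 1 3 = μ * plucker x y 1 3) (h23 : plucker u v 2 3 = μ * plucker x y 2 3) :
    ∀ k l, plucker u v k l = μ * plucker x y k l := by
  simp only [plucker] at *
  intro k l
  fin_cases k <;> fin_cases l <;> grind

end Plucker

theorem det_tangent (u v : Fin 4 → ℝ) (t : ℝ) :
    (Matrix.of ![u, v, vGamma t, vGamma' t]).det =
      3 * t * (t ^ 2 - 1) * (t * (plucker u v 0 2 + 7 * plucker u v 0 3) - 4 * plucker u v 0 1)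
        + (21 / 2 * t ^ 2 + 3 / 2) * (plucker u v 0 2 - plucker u v 1 3)
        + 3 / 2 * (t ^ 2 - 1) * (plucker u v 0 3 - plucker u v 1 2)
        + 12 * t * (plucker u v 2 3 - plucker u v 0 1) := by
  simp only [Nat.succ_eq_add_one, Nat.reduceAdd, vGamma, one_div, neg_mul, vGamma',
    Matrix.det_succ_row_zero, Fin.isValue, Matrix.of_apply, Matrix.cons_val',
    Matrix.cons_val_fin_one, Matrix.cons_val_zero, Matrix.submatrix_apply, Fin.succ_zero_eq_one,
    Fin.succAbove, Matrix.cons_val_one, Matrix.submatrix_submatrix, Function.comp_apply,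
    Fin.succ_one_eq_two, Matrix.cons_val, Matrix.det_unique, Fin.default_eq_zero, Fin.reduceSucc,
    Fin.castSucc_zero, Fin.sum_univ_succ, Fin.coe_ofNat_eq_mod, Nat.zero_mod, pow_zero, one_mul,
    lt_self_iff_false, ↓reduceIte, Fin.castSucc_one, Finset.univ_unique, Fin.val_succ,
    Fin.val_eq_zero, zero_add, pow_one, Fin.castSucc_succ, Fin.succ_pos, Finset.sum_neg_distrib,
    Finset.sum_singleton, not_lt_zero, Fin.reduceCastSucc, even_two, Even.neg_pow, one_pow,
    Fin.reduceLT, mul_zero, neg_zero, add_zero, Fin.lt_one_iff, Fin.reduceEq, plucker]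
  ring

theorem linearIndependent_tangent (t : ℝ) : LinearIndependent ℝ ![vGamma t, vGamma' t] :=
  linearIndependent_pair_iff_exists_plucker_ne_zero.2
    ⟨0, 2, by simp [plucker, vGamma, vGamma']; positivity⟩

/-- The plane with Plücker coordinates `p₀₁ = 1`, `p₀₂ = p₁₃ = c`, `p₀₃ = p₁₂ = d`,
`p₂₃ = c² - d²`. -/
def graphPlane (c d : ℝ) : Submodule ℝ (Fin 4 → ℝ) :=
  span ℝ {![1, 0, -d, -c], ![0, 1, c, d]}

theorem linearIndependent_graphPlane_basis (c d : ℝ) :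
    LinearIndependent ℝ ![![1, 0, -d, -c], ![0, 1, c, d]] :=
  linearIndependent_pair_iff_exists_plucker_ne_zero.2 ⟨0, 1, by simp [plucker]⟩

theorem finrank_graphPlane (c d : ℝ) : Module.finrank ℝ (graphPlane c d) = 2 :=
  finrank_span_pair (linearIndependent_graphPlane_basis c d)

theorem graphPlane_injective : Function.Injective fun p : ℝ × ℝ => graphPlane p.1 p.2 := by
  rintro ⟨c, d⟩ ⟨c', d'⟩ h
  have h : graphPlane c d = graphPlane c' d' := h
  have hmem : ![1, 0, -d, -c] ∈ graphPlane c' d' := h ▸ subset_span (by simp)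
  obtain ⟨a, b, hab⟩ := mem_span_pair.1 hmem
  have h0 := congrFun hab 0
  have h1 := congrFun hab 1
  have h2 := congrFun hab 2
  have h3 := congrFun hab 3
  simp only [Matrix.smul_cons, smul_eq_mul, mul_one, mul_zero, mul_neg, Matrix.smul_empty,
    Pi.add_apply, Matrix.cons_val_zero, add_zero, Matrix.cons_val_one, zero_add, Matrix.cons_val]
    at h0 h1 h2 h3
  subst h0 h1
  simp only [Prod.mk.injEq]
  constructor <;> linarith

theorem graphPlane_inf_Lhat_ne_bot_iff {c d : ℝ} (hcd : c ^ 2 - d ^ 2 = 1) (t : ℝ) :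
    graphPlane c d ⊓ Lhat t ≠ ⊥ ↔ t * (t ^ 2 - 1) * (t * (c + 7 * d) - 4) = 0 := by
  rw [graphPlane, Lhat, span_pair_inf_span_pair_ne_bot_iff_det_eq_zero
    (linearIndependent_graphPlane_basis c d) (linearIndependent_tangent t), det_tangent]
  simp only [plucker, Matrix.cons_val_zero, Matrix.cons_val_one, Matrix.cons_val, one_mul,
    mul_one, mul_zero, zero_mul, sub_zero, sub_self, zero_add, add_zero, sub_neg_eq_add, neg_mul]
  constructor <;> intro h
  · linear_combination h / 3 - 4 * t * hcd
  · linear_combination 3 * h + 12 * t * hcd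

theorem exists_graphPlane_eq_span {s : ℝ} (hs : s ≠ 0) {u v : Fin 4 → ℝ}
    (huv : LinearIndependent ℝ ![u, v])
    (h13 : plucker u v 1 3 = plucker u v 0 2) (h12 : plucker u v 1 2 = plucker u v 0 3)
    (h23 : plucker u v 2 3 = plucker u v 0 1)
    (hline : s * (plucker u v 0 2 + 7 * plucker u v 0 3) = 4 * plucker u v 0 1) :
    ∃ c d, (c ^ 2 - d ^ 2 = 1 ∧ s * (c + 7 * d) = 4) ∧ graphPlane c d = span ℝ {u, v} := by
  have hconic : plucker u v 0 2 ^ 2 - plucker u v 0 3 ^ 2 = plucker u v 0 1 ^ 2 := by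
    linear_combination -plucker_relation u v 0 1 2 3 + plucker u v 0 1 * h23
      - plucker u v 0 2 * h13 + plucker u v 0 3 * h12
  set p := plucker u v with hp
  have h01 : p 0 1 ≠ 0 := by
    intro h01
    have h02 : p 0 2 = -7 * p 0 3 := by
      have := (mul_eq_zero.1 (hline.trans (by rw [h01, mul_zero]))).resolve_left hs
      linear_combination this
    have h03 : p 0 3 = 0 := by
      have : 48 * p 0 3 ^ 2 = 0 := by
        linear_combination hconic - (p 0 2 - 7 * p 0 3) * h02 + p 0 1 * h01
      exact pow_eq_zero_iff two_ne_zero |>.1 ((mul_eq_zero.1 this).resolve_left (by norm_num))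
    obtain ⟨i, j, hij⟩ := linearIndependent_pair_iff_exists_plucker_ne_zero.1 huv
    refine hij ((plucker_fin_four_ext (μ := 0) (x := u) (y := v) ?_ ?_ ?_ ?_ ?_ ?_ i j).trans
      (zero_mul _)) <;> rw [← hp] <;> simp [h01, h02, h03, h12, h13, h23]
  refine ⟨p 0 2 / p 0 1, p 0 3 / p 0 1, ⟨?_, ?_⟩,
    (span_pair_eq_of_plucker_eq_mul h01 (i := 0) (j := 1) (by simp [plucker]) ?_).symm⟩
  · field_simp
    linear_combination hconic
  · field_simp
    linear_combination hline
  · refine plucker_fin_four_ext ?_ ?_ ?_ ?_ ?_ ?_ <;> rw [← hp] <;>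
      simp only [plucker, Matrix.cons_val_zero, Matrix.cons_val_one, Matrix.cons_val, one_mul,
        mul_one, mul_zero, zero_mul, sub_zero, zero_add, sub_neg_eq_add, neg_mul] <;>
      field_simp
    exacts [h12, h13, by linear_combination p 0 1 * h23 - hconic]

theorem meets_four_tangents_iff {s : ℝ} (hs0 : s ≠ 0) (hs1 : s ^ 2 ≠ 1)
    (W : Submodule ℝ (Fin 4 → ℝ)) :
    (Module.finrank ℝ W = 2 ∧ W ⊓ Lhat (-1) ≠ ⊥ ∧ W ⊓ Lhat 0 ≠ ⊥ ∧ W ⊓ Lhat 1 ≠ ⊥ ∧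
      W ⊓ Lhat s ≠ ⊥) ↔
      ∃ p : ℝ × ℝ, (p.1 ^ 2 - p.2 ^ 2 = 1 ∧ s * (p.1 + 7 * p.2) = 4) ∧ graphPlane p.1 p.2 = W := by
  constructor
  · rintro ⟨hW, h_neg_one, h_zero, h_one, h_s⟩
    obtain ⟨u, v, huv, rfl⟩ := exists_linearIndependent_pair_of_finrank_eq_two hW
    simp only [Lhat, span_pair_inf_span_pair_ne_bot_iff_det_eq_zero huv
      (linearIndependent_tangent _), det_tangent] at h_neg_one h_zero h_one h_s
    have h13 : plucker u v 1 3 = plucker u v 0 2 := by linear_combination -(h_neg_one + h_one) / 24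
    have h23 : plucker u v 2 3 = plucker u v 0 1 := by linear_combination (h_one - h_neg_one) / 24
    have h12 : plucker u v 1 2 = plucker u v 0 3 := by linear_combination 2 / 3 * h_zero + h13
    have hline : s * (plucker u v 0 2 + 7 * plucker u v 0 3) = 4 * plucker u v 0 1 := by
      have : 3 * s * (s ^ 2 - 1) * (s * (plucker u v 0 2 + 7 * plucker u v 0 3)
          - 4 * plucker u v 0 1) = 0 := by
        linear_combination h_s + (21 / 2 * s ^ 2 + 3 / 2) * h13 + 3 / 2 * (s ^ 2 - 1) * h12
          - 12 * s * h23
      have hs : 3 * s * (s ^ 2 - 1) ≠ 0 := by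
        simp [hs0, sub_eq_zero, hs1]
      linear_combination (mul_eq_zero.1 this).resolve_left hs
    obtain ⟨c, d, hcd, hW⟩ := exists_graphPlane_eq_span hs0 huv h13 h12 h23 hline
    exact ⟨(c, d), hcd, hW⟩
  · rintro ⟨⟨c, d⟩, ⟨hcd, hline⟩, rfl⟩
    refine ⟨finrank_graphPlane c d, ?_, ?_, ?_, ?_⟩ <;>
      rw [graphPlane_inf_Lhat_ne_bot_iff hcd]
    · norm_num
    · norm_num
    · norm_num
    · linear_combination s * (s ^ 2 - 1) * hline

theorem ncard_hyperbola_inter_line {s : ℝ} (hs : s ≠ 0) :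
    {p : ℝ × ℝ | p.1 ^ 2 - p.2 ^ 2 = 1 ∧ s * (p.1 + 7 * p.2) = 4}.ncard = 2 := by
  set e := √(1 + 3 * s ^ 2)
  have he : e ^ 2 = 1 + 3 * s ^ 2 := Real.sq_sqrt (by positivity)
  have he0 : 0 < e := Real.sqrt_pos.2 (by positivity)
  have hsol : {p : ℝ × ℝ | p.1 ^ 2 - p.2 ^ 2 = 1 ∧ s * (p.1 + 7 * p.2) = 4} =
      {((-1 - 7 * e) / (12 * s), (7 + e) / (12 * s)),
        ((-1 + 7 * e) / (12 * s), (7 - e) / (12 * s))} := by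
    ext ⟨c, d⟩
    simp only [Set.mem_ofPred_eq, Set.mem_insert_iff, Set.mem_singleton_iff, Prod.mk.injEq]
    constructor
    · rintro ⟨hcd, hline⟩
      have : (12 * s * d - 7 - e) * (12 * s * d - 7 + e) = 0 := by
        linear_combination -he + 3 * s ^ 2 * hcd - 3 * (s * c + 4 - 7 * s * d) * hline
      rcases mul_eq_zero.1 this with h | h
      · left
        constructor <;> field_simp
        · linear_combination 12 * hline - 7 * h
        · linear_combination h
      · right
        constructor <;> field_simp
        · linear_combination 12 * hline - 7 * h
        · linear_combination h
    · rintro (⟨rfl, rfl⟩ | ⟨rfl, rfl⟩) <;> constructor <;> field_simp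
      · linear_combination 48 * he
      · ring
      · linear_combination 48 * he
      · ring
  rw [hsol, Set.ncard_pair]
  intro h
  have := congrArg Prod.snd h
  field_simp at this
  linarith

/-- For every s ∈ (0,1), there are exactly two 2-dimensional linear subspaces W of ℝ⁴
meeting each of L(−1), L(0), L(1), L(s) nontrivially: this instance of the problem of
four lines has exactly two solutions, and both are real. -/
theorem stmt_6 (s : ℝ) (hs : s ∈ Set.Ioo (0 : ℝ) 1) :
    {W : Submodule ℝ (Fin 4 → ℝ) | Module.finrank ℝ W = 2 ∧
        W ⊓ Lhat (-1) ≠ ⊥ ∧ W ⊓ Lhat 0 ≠ ⊥ ∧ W ⊓ Lhat 1 ≠ ⊥ ∧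
          W ⊓ Lhat s ≠ ⊥}.ncard = 2 := by
  have hs0 : s ≠ 0 := hs.1.ne'
  have hs1 : s ^ 2 ≠ 1 := by nlinarith [hs.1, hs.2]
  have hsol : {W : Submodule ℝ (Fin 4 → ℝ) | Module.finrank ℝ W = 2 ∧
        W ⊓ Lhat (-1) ≠ ⊥ ∧ W ⊓ Lhat 0 ≠ ⊥ ∧ W ⊓ Lhat 1 ≠ ⊥ ∧ W ⊓ Lhat s ≠ ⊥} =
      (fun p : ℝ × ℝ => graphPlane p.1 p.2) ''
        {p | p.1 ^ 2 - p.2 ^ 2 = 1 ∧ s * (p.1 + 7 * p.2) = 4} := by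
    ext W
    exact meets_four_tangents_iff hs0 hs1 W
  rw [hsol, Set.ncard_image_of_injective _ graphPlane_injective, ncard_hyperbola_inter_line hs0]
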